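/- For every real φ with 0 < φ < π, ∑_{n=1}^∞ (-1)^{n-1} cos(nφ)/(n+2) < log 2 − 1/2. -/

import Mathlib

/-!
Writing `e = exp (iφ)` and `1 / (n + 2) = ∫₀¹ t^(n+1) dt`, the series is
`∫₀¹ Re (t² e / (1 + t e)) dt`: for `0 ≤ t < 1` the geometric series `∑ (-1)^(n+1) cos (nφ) t^(n+1) = Re (-t ∑ (-t e)^n)` converges to the integrand,
and since `‖1 + t e‖ ≥ |sin φ|` its partial sums are bounded by `2 / |sin φ|`, so dominated
convergence applies. Finally `Re (t² e / (1 + t e)) = t² (cos φ + t) / |1 + t e|²` falls short of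
`t² / (1 + t)` by `t² (1 - cos φ) (1 - t) / ((1 + t) |1 + t e|²) ≥ 0`, and
`∫₀¹ t² / (1 + t) dt = log 2 - 1/2`.
-/

open Real Filter Topology Finset

section GeomSum

variable {K : Type*}

theorem geom_sum_Icc_one [Field K] {x : K} (hx : x ≠ 1) (N : ℕ) :
    ∑ n ∈ Icc 1 N, x ^ n = (x ^ (N + 1) - x) / (x - 1) := by
  rw [← Ico_add_one_right_eq_Icc, geom_sum_Ico hx (by omega), pow_one]

variable [NormedField K]

theorem norm_geom_sum_Icc_one_le {x : K} (hx : ‖x‖ ≤ 1) (hx1 : x ≠ 1) (N : ℕ) :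
    ‖∑ n ∈ Icc 1 N, x ^ n‖ ≤ 2 / ‖x - 1‖ := by
  rw [geom_sum_Icc_one hx1, norm_div]
  gcongr
  calc ‖x ^ (N + 1) - x‖ ≤ ‖x‖ ^ (N + 1) + ‖x‖ := by rw [← norm_pow]; exact norm_sub_le _ _
    _ ≤ 1 + 1 := by gcongr; exact pow_le_one₀ (norm_nonneg x) hx
    _ = 2 := by norm_num

theorem tendsto_geom_sum_Icc_one {x : K} (hx : ‖x‖ < 1) :
    Tendsto (fun N ↦ ∑ n ∈ Icc 1 N, x ^ n) atTop (𝓝 (x / (1 - x))) := by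
  have hx1 : x ≠ 1 := by rintro rfl; simp at hx
  have hpow : Tendsto (fun N : ℕ ↦ x ^ (N + 1)) atTop (𝓝 0) :=
    (tendsto_pow_atTop_nhds_zero_of_norm_lt_one hx).comp (tendsto_add_atTop_nat 1)
  simp_rw [geom_sum_Icc_one hx1]
  convert (hpow.sub_const x).div_const (x - 1) using 2
  rw [zero_sub, neg_div, ← div_neg, neg_sub]

end GeomSum

namespace Complex

theorem re_ofReal_mul_exp_pow (r φ : ℝ) (n : ℕ) :
    (((r : ℂ) * exp (φ * I)) ^ n).re = r ^ n * Real.cos (n * φ) := by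
  rw [mul_pow, ← exp_nat_mul, ← ofReal_pow, re_ofReal_mul, ← mul_assoc, ← ofReal_natCast,
    ← ofReal_mul, exp_ofReal_mul_I_re]

theorem normSq_one_add_ofReal_mul_exp (t φ : ℝ) :
    normSq (1 + t * exp (φ * I)) = 1 + 2 * t * Real.cos φ + t ^ 2 := by
  rw [normSq_apply]
  simp only [add_re, add_im, one_re, one_im, re_ofReal_mul, im_ofReal_mul, exp_ofReal_mul_I_re,
    exp_ofReal_mul_I_im]
  linear_combination t ^ 2 * Real.cos_sq_add_sin_sq φ

theorem abs_sin_le_norm_one_add_ofReal_mul_exp (t φ : ℝ) :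
    |Real.sin φ| ≤ ‖1 + t * exp (φ * I)‖ := by
  rw [← sq_le_sq₀ (abs_nonneg _) (norm_nonneg _), sq_abs, ← normSq_eq_norm_sq,
    normSq_one_add_ofReal_mul_exp]
  nlinarith [sq_nonneg (t + Real.cos φ), Real.cos_sq_add_sin_sq φ]

theorem norm_ofReal_mul_exp (t φ : ℝ) : ‖(t : ℂ) * exp (φ * I)‖ = |t| := by
  rw [norm_mul, norm_exp_ofReal_mul_I, mul_one, norm_real, Real.norm_eq_abs]

end Complex

namespace AltCosSeries

noncomputable def partialSum (φ : ℝ) (N : ℕ) (t : ℝ) : ℝ :=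
  ∑ n ∈ Icc 1 N, (-1) ^ (n + 1) * Real.cos (n * φ) * t ^ (n + 1)

noncomputable def limit (φ t : ℝ) : ℝ :=
  t ^ 2 * (Real.cos φ + t) / (1 + 2 * t * Real.cos φ + t ^ 2)

variable {φ : ℝ}

open Complex in
theorem partialSum_eq_re (φ : ℝ) (N : ℕ) (t : ℝ) :
    partialSum φ N t = (-(t : ℂ) * ∑ n ∈ Icc 1 N, ((-t : ℝ) * exp (φ * I)) ^ n).re := by
  simp only [partialSum, mul_sum, re_sum, neg_mul, ← ofReal_neg, re_ofReal_mul,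
    re_ofReal_mul_exp_pow]
  exact sum_congr rfl fun n _ ↦ by ring

theorem abs_partialSum_le (hφ : Real.sin φ ≠ 0) (N : ℕ) {t : ℝ} (ht0 : 0 ≤ t) (ht1 : t ≤ 1) :
    |partialSum φ N t| ≤ 2 / |Real.sin φ| := by
  set z : ℂ := ((-t : ℝ) : ℂ) * Complex.exp (φ * Complex.I)
  have hz : ‖z‖ ≤ 1 := by rw [Complex.norm_ofReal_mul_exp, abs_neg, abs_of_nonneg ht0]; exact ht1
  have hz1 : |Real.sin φ| ≤ ‖z - 1‖ := by
    rw [← norm_neg, show -(z - 1) = 1 + t * Complex.exp (φ * Complex.I) by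
      simp only [z, Complex.ofReal_neg]; ring]
    exact Complex.abs_sin_le_norm_one_add_ofReal_mul_exp t φ
  have hpos : 0 < |Real.sin φ| := abs_pos.2 hφ
  have hz_ne_one : z ≠ 1 := by rintro h; rw [h, sub_self, norm_zero] at hz1; linarith
  rw [partialSum_eq_re]
  calc _ ≤ ‖-(t : ℂ) * ∑ n ∈ Icc 1 N, z ^ n‖ := Complex.abs_re_le_norm _
    _ = t * ‖∑ n ∈ Icc 1 N, z ^ n‖ := by
      rw [norm_mul, norm_neg, Complex.norm_real, Real.norm_eq_abs, abs_of_nonneg ht0]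
    _ ≤ 1 * (2 / ‖z - 1‖) := by
      gcongr
      exact norm_geom_sum_Icc_one_le hz hz_ne_one N
    _ ≤ 2 / |Real.sin φ| := by rw [one_mul]; gcongr

open Complex in
theorem limit_eq_re (φ t : ℝ) :
    limit φ t = ((t : ℂ) ^ 2 * exp (φ * I) / (1 + t * exp (φ * I))).re := by
  rw [div_re, normSq_one_add_ofReal_mul_exp, ← ofReal_pow]
  simp only [add_re, add_im, one_re, one_im, re_ofReal_mul, im_ofReal_mul, exp_ofReal_mul_I_re,
    exp_ofReal_mul_I_im, limit]
  rw [← add_div]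
  congr 1
  linear_combination -t ^ 3 * Real.cos_sq_add_sin_sq φ

theorem tendsto_partialSum (φ : ℝ) {t : ℝ} (ht0 : 0 ≤ t) (ht1 : t < 1) :
    Tendsto (partialSum φ · t) atTop (𝓝 (limit φ t)) := by
  have hz : ‖((-t : ℝ) : ℂ) * Complex.exp (φ * Complex.I)‖ < 1 := by
    rw [Complex.norm_ofReal_mul_exp, abs_neg, abs_of_nonneg ht0]; exact ht1
  have hgeom :=
    (Complex.continuous_re.tendsto _).comp ((tendsto_geom_sum_Icc_one hz).const_mul (-(t : ℂ)))
  rw [limit_eq_re]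
  convert hgeom using 2 with N
  · exact partialSum_eq_re φ N t
  · push_cast
    congr 1
    ring

theorem integral_partialSum (φ : ℝ) (N : ℕ) :
    ∫ t in (0 : ℝ)..1, partialSum φ N t =
      ∑ n ∈ Icc 1 N, (-1) ^ (n + 1) * Real.cos (n * φ) / (n + 2) := by
  unfold partialSum
  rw [intervalIntegral.integral_finsetSum fun n _ ↦ (continuous_pow _).intervalIntegrable _ _
    |>.const_mul _]
  refine sum_congr rfl fun n _ ↦ ?_
  rw [intervalIntegral.integral_const_mul, integral_pow]
  push_cast
  ring

theorem tendsto_integral_partialSum (hφ : Real.sin φ ≠ 0) :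
    Tendsto (fun N ↦ ∫ t in (0 : ℝ)..1, partialSum φ N t) atTop
      (𝓝 (∫ t in (0 : ℝ)..1, limit φ t)) := by
  refine intervalIntegral.tendsto_integral_filter_of_dominated_convergence
    (fun _ ↦ 2 / |Real.sin φ|) (.of_forall fun N ↦ ?_) (.of_forall fun N ↦ ?_)
    intervalIntegrable_const ?_
  · exact (continuous_finsetSum _ fun n _ ↦ by fun_prop).aestronglyMeasurable
  · refine .of_forall fun t ht ↦ ?_
    rw [Set.uIoc_of_le zero_le_one] at ht
    exact abs_partialSum_le hφ N ht.1.le ht.2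
  · filter_upwards [MeasureTheory.Measure.ae_ne MeasureTheory.volume 1] with t ht1 ht
    rw [Set.uIoc_of_le zero_le_one] at ht
    exact tendsto_partialSum φ ht.1.le (lt_of_le_of_ne ht.2 ht1)

theorem limit_denom_pos (hφ : Real.sin φ ≠ 0) (t : ℝ) : 0 < 1 + 2 * t * Real.cos φ + t ^ 2 := by
  nlinarith [sq_nonneg (t + Real.cos φ), Real.cos_sq_add_sin_sq φ, pow_two_pos_of_ne_zero hφ]

theorem continuous_limit (hφ : Real.sin φ ≠ 0) : Continuous (limit φ) :=
  .div (by fun_prop) (by fun_prop) fun t ↦ (limit_denom_pos hφ t).ne'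

theorem sq_div_one_add_sub_limit (hφ : Real.sin φ ≠ 0) {t : ℝ} (ht : 1 + t ≠ 0) :
    t ^ 2 / (1 + t) - limit φ t =
      t ^ 2 * (1 - Real.cos φ) * (1 - t) / ((1 + t) * (1 + 2 * t * Real.cos φ + t ^ 2)) := by
  rw [limit, div_sub_div _ _ ht (limit_denom_pos hφ t).ne']
  ring

theorem integral_limit_lt (hφ : Real.sin φ ≠ 0) :
    ∫ t in (0 : ℝ)..1, limit φ t < ∫ t in (0 : ℝ)..1, t ^ 2 / (1 + t) := by
  have hcos : Real.cos φ < 1 := by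
    nlinarith [Real.cos_sq_add_sin_sq φ, pow_two_pos_of_ne_zero hφ]
  refine intervalIntegral.integral_lt_integral_of_continuousOn_of_le_of_exists_lt one_pos
    (continuous_limit hφ).continuousOn
    (.div (by fun_prop) (by fun_prop) fun t ht ↦ by linarith [ht.1])
    (fun t ⟨ht0, ht1⟩ ↦ ?_) ⟨1 / 2, by norm_num, ?_⟩
  · rw [← sub_nonneg, sq_div_one_add_sub_limit hφ (by linarith)]
    have := limit_denom_pos hφ t
    positivity
  · rw [← sub_pos, sq_div_one_add_sub_limit hφ (by norm_num)]
    have := limit_denom_pos hφ (1 / 2)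
    have : 0 < 1 - Real.cos φ := by linarith
    positivity

end AltCosSeries

theorem integral_sq_div_one_add : ∫ t in (0 : ℝ)..1, t ^ 2 / (1 + t) = log 2 - 1 / 2 := by
  have hderiv : ∀ t ∈ Set.uIcc (0 : ℝ) 1,
      HasDerivAt (fun t ↦ t ^ 2 / 2 - t + log (1 + t)) (t ^ 2 / (1 + t)) t := by
    intro t ht
    rw [Set.uIcc_of_le zero_le_one] at ht
    have h1t : 1 + t ≠ 0 := by linarith [ht.1]
    refine ((((hasDerivAt_pow 2 t).div_const 2).sub (hasDerivAt_id' t)).add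
      (((hasDerivAt_id' t).const_add 1).log h1t)).congr_deriv ?_
    field_simp
    ring
  rw [intervalIntegral.integral_eq_sub_of_hasDerivAt hderiv
    (ContinuousOn.intervalIntegrable (.div (by fun_prop) (by fun_prop) fun t ht ↦ ?_))]
  · norm_num
    ring
  · rw [Set.uIcc_of_le zero_le_one] at ht
    linarith [ht.1]

open AltCosSeries in
/-- Case `r = 1` of the main inequality:
`∑_{n=1}^∞ (-1)^{n-1} cos(nφ)/(n+2) < log 2 - 1/2` for `0 < φ < π`. -/
theorem stmt_1 (φ : ℝ) (hφ0 : 0 < φ) (hφπ : φ < π) (A : ℝ)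
    (hA : Tendsto (fun N : ℕ => ∑ n ∈ Finset.Icc 1 N,
        (-1 : ℝ) ^ (n + 1) * Real.cos ((n : ℝ) * φ) / ((n : ℝ) + 2)) atTop (nhds A)) :
    A < Real.log 2 - 1 / 2 := by
  have hsin : Real.sin φ ≠ 0 := (Real.sin_pos_of_pos_of_lt_pi hφ0 hφπ).ne'
  have hA_eq : A = ∫ t in (0 : ℝ)..1, limit φ t := by
    simp_rw [← integral_partialSum] at hA
    exact tendsto_nhds_unique hA (tendsto_integral_partialSum hsin)
  rw [hA_eq, ← integral_sq_div_one_add]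
  exact integral_limit_lt hsin
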